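/- arXiv:0911.0360 — 2 statements merged into one kernel-verified Lean document; each statement's English description precedes it below -/
import Mathlib

section
/- Let ρₘ : [0,1] → ℝ be continuous functions with ρₘ(s) > 0 on [0,1], satisfying ρₘ(s) ≤ ρₘ(sₘ) + C(s−sₘ)^{1/2} for all s ∈ [sₘ,1] with a uniform constant C > 0, where sₘ ∈ [0,1] and ρₘ(sₘ) → 0. Assume moreover that ρₘ(1) = c₀ > 0 for all m. Then ∫₀¹ ρₘ(s)^{-2} ds → +∞ as m → ∞. -/
open Set Filter MeasureTheory Topology

/-! The Hölder bound gives `ρₘ(s)² ≤ 2ρₘ(sₘ)² + 2C²(s - sₘ)` on `[sₘ, 1]`; integrating the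
reciprocal of this affine majorant gives
`∫₀¹ ρₘ⁻² ≥ (2C²)⁻¹ log (1 + C²(1 - sₘ)/ρₘ(sₘ)²)`. Evaluating the Hölder bound at `s = 1` shows
`1 - sₘ ≥ (c₀/(2C))²` once `ρₘ(sₘ) ≤ c₀/2`, so the logarithm diverges as `ρₘ(sₘ) → 0`. -/

lemma sq_le_two_mul_sq_add_of_le_add_mul_sqrt {r ε C t : ℝ} (hr : 0 ≤ r) (ht : 0 ≤ t)
    (h : r ≤ ε + C * √t) : r ^ 2 ≤ 2 * ε ^ 2 + 2 * C ^ 2 * t := calc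
  r ^ 2 ≤ (ε + C * √t) ^ 2 := pow_le_pow_left₀ hr h 2
  _ ≤ 2 * (ε ^ 2 + (C * √t) ^ 2) := add_sq_le
  _ = 2 * ε ^ 2 + 2 * C ^ 2 * t := by rw [mul_pow, Real.sq_sqrt ht]; ring

lemma sq_div_le_of_le_add_mul_sqrt {r ε C t : ℝ} (hr : 0 ≤ r) (hC : 0 < C) (ht : 0 ≤ t)
    (h : r ≤ ε + C * √t) (hε : ε ≤ r / 2) : (r / (2 * C)) ^ 2 ≤ t := by
  rw [← Real.le_sqrt (by positivity) ht, div_le_iff₀ (by positivity)]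
  linarith

lemma integral_inv_affine {a b p q : ℝ} (hab : a ≤ b) (hp : 0 < p) (hq : 0 < q) :
    ∫ s in a..b, (p + q * (s - a))⁻¹ = q⁻¹ * Real.log (1 + q * (b - a) / p) := by
  have hpb : 0 < p + q * (b - a) := by nlinarith
  calc ∫ s in a..b, (p + q * (s - a))⁻¹ = ∫ s in a..b, (q * s + (p - q * a))⁻¹ := by
        congr 1; ext s; ring_nf
    _ = q⁻¹ * ∫ x in p..p + q * (b - a), x⁻¹ := by
        rw [intervalIntegral.integral_comp_mul_add (fun x => x⁻¹) hq.ne', smul_eq_mul]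
        ring_nf
    _ = q⁻¹ * Real.log (1 + q * (b - a) / p) := by
        rw [integral_inv_of_pos hp hpb, add_div, div_self hp.ne']

lemma tendsto_log_one_add_div_atTop {α : Type*} {l : Filter α} {f : α → ℝ} {K : ℝ}
    (hK : 0 < K) (hf : Tendsto f l (𝓝[>] 0)) :
    Tendsto (fun x => Real.log (1 + K / f x)) l atTop := by
  refine Real.tendsto_log_atTop.comp (tendsto_atTop_add_const_left _ 1 ?_)
  simp only [div_eq_mul_inv]
  exact (tendsto_inv_nhdsGT_zero.comp hf).const_mul_atTop hK

lemma log_le_integral_inv_sq {ρ : ℝ → ℝ} {x₀ x₁ a C : ℝ} (hC : 0 < C) (ha : a ∈ Icc x₀ x₁)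
    (hcont : ContinuousOn ρ (Icc x₀ x₁)) (hpos : ∀ s ∈ Icc x₀ x₁, 0 < ρ s)
    (hest : ∀ s ∈ Icc a x₁, ρ s ≤ ρ a + C * √(s - a)) :
    (2 * C ^ 2)⁻¹ * Real.log (1 + C ^ 2 * (x₁ - a) / ρ a ^ 2) ≤ ∫ s in x₀..x₁, 1 / ρ s ^ 2 := by
  have hρa : 0 < ρ a := hpos a ha
  have hint : IntervalIntegrable (fun s => 1 / ρ s ^ 2) volume x₀ x₁ :=
    (continuousOn_const.div (hcont.pow 2) fun s hs =>
      (pow_pos (hpos s hs) 2).ne').intervalIntegrable_of_Icc (ha.1.trans ha.2)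
  have hint₁ := hint.mono_set (uIcc_subset_uIcc_left (Icc_subset_uIcc ha))
  have hint₂ := hint.mono_set (uIcc_subset_uIcc_right (Icc_subset_uIcc ha))
  have hcmp : ∀ s ∈ Icc a x₁, (2 * ρ a ^ 2 + 2 * C ^ 2 * (s - a))⁻¹ ≤ 1 / ρ s ^ 2 := by
    intro s hs
    have hs₀ : s ∈ Icc x₀ x₁ := ⟨ha.1.trans hs.1, hs.2⟩
    rw [one_div]
    exact inv_anti₀ (pow_pos (hpos s hs₀) 2) (sq_le_two_mul_sq_add_of_le_add_mul_sqrt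
      (hpos s hs₀).le (sub_nonneg.2 hs.1) (hest s hs))
  have hcmp_int :
      IntervalIntegrable (fun s => (2 * ρ a ^ 2 + 2 * C ^ 2 * (s - a))⁻¹) volume a x₁ :=
    (ContinuousOn.inv₀ (by fun_prop) fun s hs => by nlinarith [hs.1]).intervalIntegrable_of_Icc ha.2
  calc (2 * C ^ 2)⁻¹ * Real.log (1 + C ^ 2 * (x₁ - a) / ρ a ^ 2)
      = ∫ s in a..x₁, (2 * ρ a ^ 2 + 2 * C ^ 2 * (s - a))⁻¹ := by
        rw [integral_inv_affine ha.2 (by positivity) (by positivity)]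
        congr 3
        field_simp
    _ ≤ ∫ s in a..x₁, 1 / ρ s ^ 2 := intervalIntegral.integral_mono_on ha.2 hcmp_int hint₂ hcmp
    _ ≤ ∫ s in x₀..x₁, 1 / ρ s ^ 2 := by
        rw [← intervalIntegral.integral_add_adjacent_intervals hint₁ hint₂, le_add_iff_nonneg_left]
        exact intervalIntegral.integral_nonneg ha.1 fun s _ => by positivity

/-- **Abstract Gordon's lemma (Lemma 4.2).** If `ρₘ : [0,1] → (0,∞)` are continuous,
satisfy the uniform Hölder-type bound `ρₘ(s) ≤ ρₘ(sₘ) + C √(s−sₘ)` on `[sₘ,1]`, the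
minima `ρₘ(sₘ)` tend to `0` and `ρₘ(1) = c₀ > 0` for all `m`, then
`∫₀¹ ρₘ(s)⁻² ds → +∞`. -/
theorem stmt10 (ρ : ℕ → ℝ → ℝ) (sm : ℕ → ℝ) (C c₀ : ℝ) (hC : 0 < C) (hc₀ : 0 < c₀)
    (hsm : ∀ m, sm m ∈ Icc (0:ℝ) 1)
    (hcont : ∀ m, ContinuousOn (ρ m) (Icc 0 1))
    (hpos : ∀ m, ∀ s ∈ Icc (0:ℝ) 1, 0 < ρ m s)
    (hest : ∀ m, ∀ s ∈ Icc (sm m) 1, ρ m s ≤ ρ m (sm m) + C * Real.sqrt (s - sm m))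
    (hmin : Tendsto (fun m => ρ m (sm m)) atTop (nhds 0))
    (hend : ∀ m, ρ m 1 = c₀) :
    Tendsto (fun m => ∫ s in (0:ℝ)..1, 1 / (ρ m s) ^ 2) atTop atTop := by
  have hmin_sq : Tendsto (fun m => ρ m (sm m) ^ 2) atTop (𝓝[>] 0) :=
    tendsto_nhdsWithin_iff.2 ⟨by simpa using hmin.pow 2,
      Eventually.of_forall fun m => pow_pos (hpos m _ (hsm m)) 2⟩
  have hgap : ∀ᶠ m in atTop, (c₀ / (2 * C)) ^ 2 ≤ 1 - sm m := by
    filter_upwards [hmin.eventually_le_const (half_pos hc₀)] with m hm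
    refine sq_div_le_of_le_add_mul_sqrt hc₀.le hC (sub_nonneg.2 (hsm m).2) ?_ hm
    simpa only [hend] using hest m 1 ⟨(hsm m).2, le_rfl⟩
  refine tendsto_atTop_mono' atTop ?_ ((tendsto_log_one_add_div_atTop
    (by positivity : 0 < C ^ 2 * (c₀ / (2 * C)) ^ 2) hmin_sq).const_mul_atTop
    (by positivity : (0:ℝ) < (2 * C ^ 2)⁻¹))
  filter_upwards [hgap] with m hm
  calc (2 * C ^ 2)⁻¹ * Real.log (1 + C ^ 2 * (c₀ / (2 * C)) ^ 2 / ρ m (sm m) ^ 2)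
      ≤ (2 * C ^ 2)⁻¹ * Real.log (1 + C ^ 2 * (1 - sm m) / ρ m (sm m) ^ 2) := by
        have := hpos m _ (hsm m)
        gcongr
    _ ≤ _ := log_le_integral_inv_sq hC (hsm m) (hcont m) (hpos m) (hest m)
end

section
/- Let G : ℝⁿ → ℝ be continuous, C² on ℝⁿ∖{0}, positively homogeneous of degree 2, vanishing only at 0, with positive definite Hessian ½∂²G(y) for all y ≠ 0. Then the Legendre map L : ℝⁿ → ℝⁿ, L(y) = ½∂G(y) for y ≠ 0 and L(0) = 0, is a homeomorphism of ℝⁿ. -/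
/-!
Since `G` is `2`-homogeneous and bounded on the unit sphere, `|G y| ≤ C‖y‖²`, so `G` is
differentiable at `0` with derivative `0`; hence the Legendre map is `½∇G` on all of `ℝⁿ`, and
`∇G` is continuous and positively `1`-homogeneous. It is strictly monotone,
`⟪∇G y - ∇G z, y - z⟫ > 0` for `y ≠ z`: on a segment avoiding `0` this is the positivity of the
Hessian, and if the segment passes through `0` then `z = -r y` with `r ≥ 0`, and Euler's identity
`⟪∇G y, y⟫ = 2 G y` finishes. So `∇G` is injective. It is onto because the coercive function
`G - ⟪q, ·⟫` (note `G ≥ c‖y‖²` with `c > 0`) has a global minimum, a critical point. Finally Euler's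
identity and Cauchy–Schwarz give `‖∇G y‖ ≥ 2c‖y‖`, so `∇G` is proper, hence closed, and therefore
a homeomorphism.
-/

open Set Metric Filter Topology InnerProductSpace
open scoped RealInnerProductSpace

theorem unit_sphere_subset_ne_zero {E : Type*} [NormedAddCommGroup E] :
    sphere (0 : E) 1 ⊆ {y | y ≠ 0} :=
  fun y hy => ne_zero_of_mem_unit_sphere ⟨y, hy⟩

section Homogeneous

variable {E F : Type*} [NormedAddCommGroup E] [NormedSpace ℝ E]
  [NormedAddCommGroup F] [NormedSpace ℝ F]

theorem map_zero_of_homogeneous {f : E → F} {k : ℕ} (hk : k ≠ 0)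
    (hf : ∀ y (t : ℝ), 0 < t → f (t • y) = t ^ k • f y) : f 0 = 0 := by
  have h : ((2 : ℝ) ^ k - 1) • f 0 = 0 := by
    rw [sub_smul, one_smul, sub_eq_zero, ← hf 0 2 two_pos, smul_zero]
  exact (smul_eq_zero.mp h).resolve_left (sub_ne_zero.mpr (one_lt_pow₀ one_lt_two hk).ne')

theorem eq_norm_pow_smul_of_homogeneous {f : E → F} {k : ℕ}
    (hf : ∀ y (t : ℝ), 0 < t → f (t • y) = t ^ k • f y) {y : E} (hy : y ≠ 0) :
    f y = ‖y‖ ^ k • f (‖y‖⁻¹ • y) := by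
  rw [← hf _ _ (norm_pos_iff.mpr hy), smul_inv_smul₀ (norm_ne_zero_iff.mpr hy)]

theorem inv_norm_smul_mem_unit_sphere {y : E} (hy : y ≠ 0) : ‖y‖⁻¹ • y ∈ sphere (0 : E) 1 := by
  rw [mem_sphere_zero_iff_norm, norm_smul, norm_inv, norm_norm,
    inv_mul_cancel₀ (norm_ne_zero_iff.mpr hy)]

theorem exists_norm_le_mul_norm_pow_of_homogeneous [FiniteDimensional ℝ E] {f : E → F} {k : ℕ}
    (hk : k ≠ 0) (hcont : ContinuousOn f (sphere 0 1))
    (hf : ∀ y (t : ℝ), 0 < t → f (t • y) = t ^ k • f y) :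
    ∃ M, ∀ y, ‖f y‖ ≤ M * ‖y‖ ^ k := by
  obtain ⟨M, hM⟩ := (isCompact_sphere (0 : E) 1).exists_bound_of_continuousOn hcont
  refine ⟨M, fun y => ?_⟩
  rcases eq_or_ne y 0 with rfl | hy
  · simp [map_zero_of_homogeneous hk hf, hk]
  rw [eq_norm_pow_smul_of_homogeneous hf hy, norm_smul, norm_pow, norm_norm, mul_comm]
  exact mul_le_mul_of_nonneg_right (hM _ (inv_norm_smul_mem_unit_sphere hy)) (by positivity)

theorem exists_pos_mul_norm_pow_le_of_homogeneous [FiniteDimensional ℝ E] {G : E → ℝ} {k : ℕ}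
    (hk : k ≠ 0) (hcont : ContinuousOn G (sphere 0 1))
    (hG : ∀ y (t : ℝ), 0 < t → G (t • y) = t ^ k * G y) (hpos : ∀ y, y ≠ 0 → 0 < G y) :
    ∃ c > 0, ∀ y, c * ‖y‖ ^ k ≤ G y := by
  rcases subsingleton_or_nontrivial E with hE | hE
  · exact ⟨1, one_pos, fun y => by simp [Subsingleton.elim y 0, map_zero_of_homogeneous hk hG, hk]⟩
  obtain ⟨v, hv, hmin⟩ := (isCompact_sphere (0 : E) 1).exists_isMinOn
    (NormedSpace.sphere_nonempty.mpr zero_le_one) hcont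
  refine ⟨G v, hpos v (ne_zero_of_mem_unit_sphere ⟨v, hv⟩), fun y => ?_⟩
  rcases eq_or_ne y 0 with rfl | hy
  · simp [map_zero_of_homogeneous hk hG, hk]
  rw [eq_norm_pow_smul_of_homogeneous hG hy, smul_eq_mul, mul_comm]
  exact mul_le_mul_of_nonneg_left (hmin (inv_norm_smul_mem_unit_sphere hy)) (by positivity)

theorem fderiv_apply_self_of_homogeneous {G : E → ℝ} {k : ℕ}
    (hG : ∀ y (t : ℝ), 0 < t → G (t • y) = t ^ k * G y) {y : E} (hy : DifferentiableAt ℝ G y) :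
    fderiv ℝ G y y = k * G y := by
  have hray : HasDerivAt (fun t : ℝ => G (t • y)) (fderiv ℝ G y y) 1 := by
    have hline : HasDerivAt (fun t : ℝ => t • y) y 1 := by
      simpa using (hasDerivAt_id (1 : ℝ)).smul_const y
    exact hy.hasFDerivAt.comp_hasDerivAt_of_eq 1 hline (one_smul ℝ y).symm
  have hpow : HasDerivAt (fun t : ℝ => t ^ k * G y) (k * G y) 1 := by
    simpa using (hasDerivAt_pow k (1 : ℝ)).mul_const (G y)
  refine hray.unique (hpow.congr_of_eventuallyEq ?_)
  filter_upwards [eventually_gt_nhds one_pos] with t ht using hG y t ht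

theorem hasFDerivAt_smul_of_homogeneous {G : E → ℝ}
    (hG : ∀ y (t : ℝ), 0 < t → G (t • y) = t ^ 2 * G y) {y : E} (hy : DifferentiableAt ℝ G y)
    {t : ℝ} (ht : 0 < t) : HasFDerivAt G (t • fderiv ℝ G y) (t • y) := by
  have hscale : HasFDerivAt (fun z : E => t ^ 2 * G (t⁻¹ • z))
      (t ^ 2 • (fderiv ℝ G y).comp (t⁻¹ • ContinuousLinearMap.id ℝ E)) (t • y) := by
    refine HasFDerivAt.const_mul ?_ _
    refine HasFDerivAt.comp (t • y) ?_ ((hasFDerivAt_id _).const_smul t⁻¹)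
    rw [inv_smul_smul₀ ht.ne']
    exact hy.hasFDerivAt
  have hfun : (fun z : E => t ^ 2 * G (t⁻¹ • z)) = G :=
    funext fun z => by rw [← hG _ _ ht, smul_inv_smul₀ ht.ne']
  have hder : t ^ 2 • (fderiv ℝ G y).comp (t⁻¹ • ContinuousLinearMap.id ℝ E) =
      t • fderiv ℝ G y := by
    ext u
    simp only [smul_apply, ContinuousLinearMap.comp_apply,
      ContinuousLinearMap.id_apply, map_smul, smul_eq_mul]
    field_simp
  rwa [hfun, hder] at hscale

theorem hasFDerivAt_zero_of_norm_le_mul_norm_sq {f : E → F} {M : ℝ}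
    (hf : ∀ y, ‖f y‖ ≤ M * ‖y‖ ^ 2) : HasFDerivAt f (0 : E →L[ℝ] F) 0 := by
  have h0 : f 0 = 0 := norm_le_zero_iff.mp (by simpa using hf 0)
  rw [hasFDerivAt_iff_isLittleO_nhds_zero]
  simp only [zero_add, h0, sub_zero, zero_apply]
  refine (Asymptotics.IsBigO.of_bound M (Eventually.of_forall fun y => ?_)).trans_isLittleO
    (Asymptotics.isLittleO_norm_pow_id one_lt_two)
  simpa using hf y

theorem hasFDerivAt_zero_of_homogeneous [FiniteDimensional ℝ E] {G : E → ℝ}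
    (hcont : ContinuousOn G (sphere 0 1)) (hG : ∀ y (t : ℝ), 0 < t → G (t • y) = t ^ 2 * G y) :
    HasFDerivAt G (0 : E →L[ℝ] ℝ) 0 :=
  have ⟨_, hM⟩ := exists_norm_le_mul_norm_pow_of_homogeneous two_ne_zero hcont hG
  hasFDerivAt_zero_of_norm_le_mul_norm_sq hM

end Homogeneous

theorem fderiv_apply_sub_lt_of_hessian_pos {E : Type*} [NormedAddCommGroup E] [NormedSpace ℝ E]
    {G : E → ℝ} {U : Set E} (hU : IsOpen U) (hG : ContDiffOn ℝ 2 G U)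
    (hpos : ∀ x ∈ U, ∀ u, u ≠ 0 → 0 < fderiv ℝ (fderiv ℝ G) x u u) {y z : E} (hyz : y ≠ z)
    (hseg : segment ℝ z y ⊆ U) : fderiv ℝ G z (y - z) < fderiv ℝ G y (y - z) := by
  set c : ℝ → E := fun t => z + t • (y - z)
  have hcU : ∀ t ∈ Icc (0 : ℝ) 1, c t ∈ U := fun t ht =>
    hseg (segment_eq_image' ℝ z y ▸ mem_image_of_mem c ht)
  have hderiv : ∀ t ∈ Icc (0 : ℝ) 1, HasDerivAt (fun t => fderiv ℝ G (c t) (y - z))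
      (fderiv ℝ (fderiv ℝ G) (c t) (y - z) (y - z)) t := by
    intro t ht
    have hc : HasDerivAt c (y - z) t := by
      simpa only [id, one_smul] using ((hasDerivAt_id t).smul_const (y - z)).const_add z
    have hG' : DifferentiableAt ℝ (fderiv ℝ G) (c t) :=
      ((hG.contDiffAt (hU.mem_nhds (hcU t ht))).fderiv_right
        (by norm_num : (1 : WithTop ℕ∞) + 1 ≤ 2)).differentiableAt one_ne_zero
    simpa using (hG'.hasFDerivAt.comp_hasDerivAt t hc).clm_apply (hasDerivAt_const t (y - z))
  have hmono : StrictMonoOn (fun t => fderiv ℝ G (c t) (y - z)) (Icc 0 1) := by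
    refine strictMonoOn_of_deriv_pos (convex_Icc 0 1)
      (fun t ht => (hderiv t ht).continuousAt.continuousWithinAt) fun t ht => ?_
    rw [interior_Icc] at ht
    rw [(hderiv t (Ioo_subset_Icc_self ht)).deriv]
    exact hpos _ (hcU t (Ioo_subset_Icc_self ht)) _ (sub_ne_zero.mpr hyz)
  simpa [c] using hmono (left_mem_Icc.mpr zero_le_one) (right_mem_Icc.mpr zero_le_one) one_pos

theorem exists_homeomorph_of_mul_norm_le {E F : Type*} [NormedAddCommGroup E] [ProperSpace E]
    [NormedAddCommGroup F] [ProperSpace F] {f : E → F} (hf : Continuous f)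
    (hbij : Function.Bijective f) {c : ℝ} (hc : 0 < c) (hle : ∀ y, c * ‖y‖ ≤ ‖f y‖) :
    ∃ h : E ≃ₜ F, ⇑h = f := by
  have hproper : IsProperMap f := by
    refine isProperMap_iff_tendsto_cocompact.mpr ⟨hf, ?_⟩
    rw [← cobounded_eq_cocompact (α := F), ← tendsto_norm_atTop_iff_cobounded]
    exact tendsto_atTop_mono hle (tendsto_norm_cocompact_atTop.const_mul_atTop hc)
  exact ⟨(Equiv.ofBijective f hbij).toHomeomorphOfContinuousClosed hf hproper.isClosedMap, rfl⟩

theorem surjective_gradient_of_le_mul_norm_sq {E : Type*} [NormedAddCommGroup E]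
    [InnerProductSpace ℝ E] [FiniteDimensional ℝ E] {G : E → ℝ} (hG : Differentiable ℝ G)
    {c : ℝ} (hc : 0 < c) (hlow : ∀ y, c * ‖y‖ ^ 2 ≤ G y) : Function.Surjective (gradient G) := by
  intro q
  set F : E → ℝ := fun y => G y - toDual ℝ E q y
  have hcoercive : Tendsto F (cocompact E) atTop := by
    have hquad : Tendsto (fun r : ℝ => r * (c * r - ‖q‖)) atTop atTop :=
      tendsto_id.atTop_mul_atTop₀
        (tendsto_atTop_add_const_right _ _ (tendsto_id.const_mul_atTop hc))
    refine tendsto_atTop_mono (fun y => ?_) (hquad.comp tendsto_norm_cocompact_atTop)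
    have hinner := real_inner_le_norm q y
    have hGy := hlow y
    simp only [Function.comp, F, toDual_apply_apply]
    nlinarith
  obtain ⟨x, hx⟩ := (hG.continuous.sub (toDual ℝ E q).continuous).exists_forall_le hcoercive
  have hFx : HasFDerivAt F (fderiv ℝ G x - toDual ℝ E q) x :=
    (hG x).hasFDerivAt.sub (toDual ℝ E q).hasFDerivAt
  have hcrit := ((isMinOn_univ_iff.mpr hx).isLocalMin univ_mem).hasFDerivAt_eq_zero hFx
  exact ⟨x, by rw [gradient, sub_eq_zero.mp hcrit, LinearIsometryEquiv.symm_apply_apply]⟩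

section Legendre

variable {E : Type*} [NormedAddCommGroup E] [InnerProductSpace ℝ E] [FiniteDimensional ℝ E]
  {G : E → ℝ}

theorem differentiable_of_homogeneous (hC2 : ContDiffOn ℝ 2 G {y | y ≠ 0})
    (hG : ∀ y (t : ℝ), 0 < t → G (t • y) = t ^ 2 * G y) : Differentiable ℝ G := by
  intro y
  rcases eq_or_ne y 0 with rfl | hy
  · exact (hasFDerivAt_zero_of_homogeneous (hC2.continuousOn.mono unit_sphere_subset_ne_zero)
      hG).differentiableAt
  · exact (hC2.contDiffAt (isOpen_ne.mem_nhds hy)).differentiableAt (by norm_num)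

theorem gradient_zero_of_homogeneous (hC2 : ContDiffOn ℝ 2 G {y | y ≠ 0})
    (hG : ∀ y (t : ℝ), 0 < t → G (t • y) = t ^ 2 * G y) : gradient G 0 = 0 := by
  have hG0 := hasFDerivAt_zero_of_homogeneous (hC2.continuousOn.mono unit_sphere_subset_ne_zero) hG
  rw [gradient, hG0.fderiv, map_zero]

theorem gradient_smul_of_homogeneous (hC2 : ContDiffOn ℝ 2 G {y | y ≠ 0})
    (hG : ∀ y (t : ℝ), 0 < t → G (t • y) = t ^ 2 * G y) (y : E) {t : ℝ} (ht : 0 ≤ t) :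
    gradient G (t • y) = t • gradient G y := by
  rcases ht.eq_or_lt with rfl | ht
  · rw [zero_smul, zero_smul, gradient_zero_of_homogeneous hC2 hG]
  rw [gradient, gradient, (hasFDerivAt_smul_of_homogeneous hG
    (differentiable_of_homogeneous hC2 hG y) ht).fderiv, map_smul]

theorem inner_gradient_self_of_homogeneous (hC2 : ContDiffOn ℝ 2 G {y | y ≠ 0})
    (hG : ∀ y (t : ℝ), 0 < t → G (t • y) = t ^ 2 * G y) (y : E) :
    ⟪gradient G y, y⟫ = 2 * G y := by
  rw [inner_gradient_left, fderiv_apply_self_of_homogeneous hG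
    (differentiable_of_homogeneous hC2 hG y), Nat.cast_ofNat]

theorem continuous_gradient_of_homogeneous (hC2 : ContDiffOn ℝ 2 G {y | y ≠ 0})
    (hG : ∀ y (t : ℝ), 0 < t → G (t • y) = t ^ 2 * G y) : Continuous (gradient G) := by
  have hcont : ContinuousOn (gradient G) {y | y ≠ 0} :=
    (toDual ℝ E).symm.continuous.comp_continuousOn
      (hC2.continuousOn_fderiv_of_isOpen isOpen_ne (by norm_num))
  obtain ⟨M, hM⟩ := exists_norm_le_mul_norm_pow_of_homogeneous one_ne_zero
    (hcont.mono unit_sphere_subset_ne_zero) fun y t ht => by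
      rw [pow_one, gradient_smul_of_homogeneous hC2 hG y ht.le]
  refine continuous_iff_continuousAt.mpr fun y => ?_
  rcases eq_or_ne y 0 with rfl | hy
  · rw [ContinuousAt, gradient_zero_of_homogeneous hC2 hG]
    refine squeeze_zero_norm (fun y => by simpa using hM y) ?_
    simpa using (continuous_const.mul continuous_norm).tendsto (0 : E) (f := fun y => M * ‖y‖)
  · exact hcont.continuousAt (isOpen_ne.mem_nhds hy)

theorem inner_gradient_sub_gradient_pos (hC2 : ContDiffOn ℝ 2 G {y | y ≠ 0})
    (hG : ∀ y (t : ℝ), 0 < t → G (t • y) = t ^ 2 * G y) (hpos : ∀ y, y ≠ 0 → 0 < G y)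
    (hhess : ∀ y, y ≠ 0 → ∀ u, u ≠ 0 → 0 < fderiv ℝ (fderiv ℝ G) y u u) {y z : E}
    (hyz : y ≠ z) : 0 < ⟪gradient G y - gradient G z, y - z⟫ := by
  have hself := inner_gradient_self_of_homogeneous hC2 hG
  by_cases h0 : (0 : E) ∈ segment ℝ z y
  · rw [mem_segment_iff_sameRay, zero_sub, sub_zero] at h0
    rcases eq_or_ne y 0 with rfl | hy
    · rw [gradient_zero_of_homogeneous hC2 hG, zero_sub, zero_sub, inner_neg_neg, hself]
      exact mul_pos two_pos (hpos z hyz.symm)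
    obtain ⟨r, hr, rfl⟩ : ∃ r : ℝ, 0 ≤ r ∧ z = r • -y := by
      obtain ⟨r, hr, hry⟩ := h0.symm.exists_nonneg_left hy
      exact ⟨r, hr, by rw [smul_neg, hry, neg_neg]⟩
    have hneg : ⟪gradient G (-y), y⟫ = -(2 * G (-y)) := by
      rw [← hself, inner_neg_right, neg_neg]
    rw [gradient_smul_of_homogeneous hC2 hG _ hr, show y - r • -y = (1 + r) • y by module,
      real_inner_smul_right, inner_sub_left, real_inner_smul_left, hself, hneg]
    have hGy := hpos y hy
    have hGny := hpos (-y) (neg_ne_zero.mpr hy)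
    exact mul_pos (by linarith) (by nlinarith [mul_nonneg hr hGny.le])
  · have hseg : segment ℝ z y ⊆ {x | x ≠ 0} := fun x hx hx0 => h0 (hx0 ▸ hx)
    have := fderiv_apply_sub_lt_of_hessian_pos isOpen_ne hC2 hhess hyz hseg
    rw [inner_sub_left, inner_gradient_left, inner_gradient_left]
    linarith

theorem mul_norm_le_norm_gradient (hC2 : ContDiffOn ℝ 2 G {y | y ≠ 0})
    (hG : ∀ y (t : ℝ), 0 < t → G (t • y) = t ^ 2 * G y) {c : ℝ} (hlow : ∀ y, c * ‖y‖ ^ 2 ≤ G y)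
    (y : E) : 2 * c * ‖y‖ ≤ ‖gradient G y‖ := by
  rcases eq_or_ne y 0 with rfl | hy
  · simp
  have hcs := real_inner_le_norm (gradient G y) y
  rw [inner_gradient_self_of_homogeneous hC2 hG] at hcs
  refine le_of_mul_le_mul_right ?_ (norm_pos_iff.mpr hy)
  nlinarith [hlow y]

theorem exists_homeomorph_eq_gradient (hC2 : ContDiffOn ℝ 2 G {y | y ≠ 0})
    (hG : ∀ y (t : ℝ), 0 < t → G (t • y) = t ^ 2 * G y) (hpos : ∀ y, y ≠ 0 → 0 < G y)
    (hhess : ∀ y, y ≠ 0 → ∀ u, u ≠ 0 → 0 < fderiv ℝ (fderiv ℝ G) y u u) :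
    ∃ h : E ≃ₜ E, ⇑h = gradient G := by
  obtain ⟨c, hc, hlow⟩ := exists_pos_mul_norm_pow_le_of_homogeneous two_ne_zero
    (hC2.continuousOn.mono unit_sphere_subset_ne_zero) hG hpos
  have hinj : Function.Injective (gradient G) := fun y z hyz => by
    by_contra hne
    simpa [hyz] using inner_gradient_sub_gradient_pos hC2 hG hpos hhess hne
  exact exists_homeomorph_of_mul_norm_le (continuous_gradient_of_homogeneous hC2 hG)
    ⟨hinj, surjective_gradient_of_le_mul_norm_sq (differentiable_of_homogeneous hC2 hG) hc hlow⟩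
    (by positivity) (mul_norm_le_norm_gradient hC2 hG hlow)

end Legendre

theorem stmt12_general (n : ℕ) (G : EuclideanSpace ℝ (Fin n) → ℝ)
    (hC2 : ContDiffOn ℝ 2 G {y : EuclideanSpace ℝ (Fin n) | y ≠ 0})
    (hhomog : ∀ (y : EuclideanSpace ℝ (Fin n)) (lam : ℝ), 0 < lam →
      G (lam • y) = lam ^ 2 * G y)
    (hpos : ∀ y : EuclideanSpace ℝ (Fin n), y ≠ 0 → 0 < G y)
    (hposdef : ∀ y : EuclideanSpace ℝ (Fin n), y ≠ 0 →
      ∀ u : EuclideanSpace ℝ (Fin n), u ≠ 0 → 0 < (1 / 2 : ℝ) * fderiv ℝ (fderiv ℝ G) y u u) :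
    ∃ h : EuclideanSpace ℝ (Fin n) ≃ₜ EuclideanSpace ℝ (Fin n),
      (h 0 = 0) ∧ ∀ y : EuclideanSpace ℝ (Fin n), y ≠ 0 →
        h y = (1 / 2 : ℝ) • gradient G y := by
  obtain ⟨h, hh⟩ := exists_homeomorph_eq_gradient hC2 hhomog hpos
    fun y hy u hu => by linarith [hposdef y hy u hu]
  refine ⟨h.trans (Homeomorph.smulOfNeZero (1 / 2 : ℝ) one_half_pos.ne'), ?_, fun y _ => ?_⟩
  · simp [hh, gradient_zero_of_homogeneous hC2 hhomog]
  · simp [hh]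

/-- **The fiberwise Legendre transform is a homeomorphism.** Let `G : ℝⁿ → ℝ` be
continuous, `C²` away from `0`, positively homogeneous of degree `2`, vanishing only at
`0`, with positive definite Hessian `½∂²G(y)` for `y ≠ 0`. Then the Legendre map
`L(y) = ½∇G(y)` for `y ≠ 0`, `L(0) = 0`, is a homeomorphism of `ℝⁿ`. -/
theorem stmt12 (n : ℕ) (G : EuclideanSpace ℝ (Fin n) → ℝ)
    (hcont : Continuous G)
    (hC2 : ContDiffOn ℝ 2 G {y : EuclideanSpace ℝ (Fin n) | y ≠ 0})
    (hhomog : ∀ (y : EuclideanSpace ℝ (Fin n)) (lam : ℝ), 0 < lam →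
      G (lam • y) = lam ^ 2 * G y)
    (hzero : ∀ y : EuclideanSpace ℝ (Fin n), G y = 0 ↔ y = 0)
    (hpos : ∀ y : EuclideanSpace ℝ (Fin n), y ≠ 0 → 0 < G y)
    (hposdef : ∀ y : EuclideanSpace ℝ (Fin n), y ≠ 0 →
      ∀ u : EuclideanSpace ℝ (Fin n), u ≠ 0 → 0 < (1 / 2 : ℝ) * fderiv ℝ (fderiv ℝ G) y u u) :
    ∃ h : EuclideanSpace ℝ (Fin n) ≃ₜ EuclideanSpace ℝ (Fin n),
      (h 0 = 0) ∧ ∀ y : EuclideanSpace ℝ (Fin n), y ≠ 0 →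
        h y = (1 / 2 : ℝ) • gradient G y :=
  stmt12_general n G hC2 hhomog hpos hposdef
end
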